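/- arXiv:2004.13357 — 4 statements merged into one kernel-verified Lean document; each statement's English description precedes it below -/
import Mathlib

section
/- The Langevin function L(x) = coth(x) - 1/x (extended by L(0) = 0) is differentiable on ℝ with derivative L'(x) = 1/x² - 1/sinh²(x) for x ≠ 0 and L'(0) = 1/3. -/
noncomputable def Langevin (x : ℝ) : ℝ := if x = 0 then 0 else Real.cosh x / Real.sinh x - 1 / x

/-!
Away from `0`, `L = coth - 1/x` is differentiated directly, using `cosh² - sinh² = 1`.
At `0` the slope `L x / x` equals `((x cosh x - sinh x) / x³) / (sinh x / x)`; the numerator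
tends to `1/3` by L'Hôpital's rule (its derivative quotient is `sinh x / (3 x)`) and the
denominator tends to `sinh' 0 = 1`.
-/

open Real Filter Topology

theorem tendsto_sinh_div_self_nhdsNE_zero :
    Tendsto (fun x : ℝ => sinh x / x) (𝓝[≠] 0) (𝓝 1) := by
  have h := (hasDerivAt_sinh 0).tendsto_slope_zero
  simp only [zero_add, sinh_zero, sub_zero, cosh_zero, smul_eq_mul] at h
  simpa only [inv_mul_eq_div] using h

theorem tendsto_mul_cosh_sub_sinh_div_pow_three_nhdsNE_zero :
    Tendsto (fun x : ℝ => (x * cosh x - sinh x) / x ^ 3) (𝓝[≠] 0) (𝓝 (1 / 3)) := by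
  refine HasDerivAt.lhopital_zero_nhdsNE (f' := fun x => x * sinh x) (g' := fun x => 3 * x ^ 2)
    ?_ ?_ ?_ ?_ ?_ ?_
  · exact .of_forall fun x =>
      (((hasDerivAt_id' x).mul (hasDerivAt_cosh x)).sub (hasDerivAt_sinh x)).congr_deriv (by ring)
  · exact .of_forall fun x => by simpa using hasDerivAt_pow 3 x
  · filter_upwards [self_mem_nhdsWithin] with x hx
    exact mul_ne_zero three_ne_zero (pow_ne_zero 2 hx)
  · simpa using ((by fun_prop : Continuous fun x : ℝ => x * cosh x - sinh x).tendsto 0).mono_left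
      nhdsWithin_le_nhds
  · simpa using ((continuous_pow 3).tendsto (0 : ℝ)).mono_left nhdsWithin_le_nhds
  · refine (tendsto_sinh_div_self_nhdsNE_zero.div_const 3).congr' ?_
    filter_upwards [self_mem_nhdsWithin] with x hx
    field_simp

theorem hasDerivAt_cosh_div_sinh {x : ℝ} (hx : x ≠ 0) :
    HasDerivAt (fun y => cosh y / sinh y) (-1 / sinh x ^ 2) x := by
  refine ((hasDerivAt_cosh x).div (hasDerivAt_sinh x) (sinh_ne_zero.mpr hx)).congr_deriv ?_
  rw [← cosh_sq_sub_sinh_sq x]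
  ring

theorem langevin_of_ne_zero {x : ℝ} (hx : x ≠ 0) : Langevin x = cosh x / sinh x - 1 / x :=
  if_neg hx

theorem langevin_hasDerivAt_of_ne_zero {x : ℝ} (hx : x ≠ 0) :
    HasDerivAt Langevin (1 / x ^ 2 - 1 / sinh x ^ 2) x := by
  have hinv : HasDerivAt (fun y : ℝ => 1 / y) (-(1 / x ^ 2)) x := by
    simpa only [one_div] using hasDerivAt_inv hx
  have h := (hasDerivAt_cosh_div_sinh hx).sub hinv
  rw [show -1 / sinh x ^ 2 - -(1 / x ^ 2) = 1 / x ^ 2 - 1 / sinh x ^ 2 by ring] at h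
  refine h.congr_of_eventuallyEq ?_
  filter_upwards [isOpen_compl_singleton.mem_nhds hx] with y hy
  exact langevin_of_ne_zero hy

theorem langevin_div_self {x : ℝ} (hx : x ≠ 0) :
    Langevin x / x = ((x * cosh x - sinh x) / x ^ 3) / (sinh x / x) := by
  have hs : sinh x ≠ 0 := sinh_ne_zero.mpr hx
  rw [langevin_of_ne_zero hx]
  field_simp

theorem langevin_hasDerivAt_zero : HasDerivAt Langevin (1 / 3) 0 := by
  rw [hasDerivAt_iff_tendsto_slope]
  have h := tendsto_mul_cosh_sub_sinh_div_pow_three_nhdsNE_zero.div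
    tendsto_sinh_div_self_nhdsNE_zero one_ne_zero
  rw [div_one] at h
  refine h.congr' ?_
  filter_upwards [self_mem_nhdsWithin] with x hx
  rw [Pi.div_apply, slope_def_field, show Langevin 0 = 0 from if_pos rfl, sub_zero, sub_zero,
    langevin_div_self hx]

theorem langevin_hasDerivAt :
    ∀ x : ℝ, HasDerivAt Langevin
      (if x = 0 then 1 / 3 else 1 / x ^ 2 - 1 / (Real.sinh x) ^ 2) x := by
  intro x
  split_ifs with hx
  · exact hx ▸ langevin_hasDerivAt_zero
  · exact langevin_hasDerivAt_of_ne_zero hx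
end

section
/- Let m : ℝ → ℝ be odd and twice continuously differentiable, and let B : ℝ → ℝ³ be differentiable such that B'(t) is always a scalar multiple of B(t). Define M(t) = m(|B(t)|) · B(t)/|B(t)| for B(t) ≠ 0 and M(t) = 0 when B(t) = 0 (equivalently M(t) = g(|B(t)|)·B(t) where g(x) = m(x)/x extended by g(0) = m'(0)). Then M is differentiable with M'(t) = m'(|B(t)|) · B'(t) for all t. -/
/-! Since `m` is odd, `m 0 = 0` and the scalar factor is `g = dslope m 0`. Where `B t = 0`, the
factor `g ‖B ·‖` is merely continuous at `t`, which suffices for the product rule against a function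
vanishing at `t`. Where `B t ≠ 0`, parallelism gives `‖B‖' = c ‖B‖`, hence
`M' = c (g r + r g' r) B` with `r = ‖B t‖`, and differentiating `r g r = m r` turns the bracket
into `m' r`. -/

section

variable {𝕜 E : Type*} [NontriviallyNormedField 𝕜] [NormedAddCommGroup E] [NormedSpace 𝕜 E]

theorem HasDerivAt.smul_of_continuousAt_of_eq_zero {φ : 𝕜 → 𝕜} {f : 𝕜 → E} {f' : E} {t : 𝕜}
    (hφ : ContinuousAt φ t) (hf : HasDerivAt f f' t) (hft : f t = 0) :
    HasDerivAt (fun s => φ s • f s) (φ t • f') t := by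
  rw [hasDerivAt_iff_tendsto_slope] at hf ⊢
  have hslope : slope (fun s => φ s • f s) t = fun s => φ s • slope f t s := by
    ext s
    simp only [slope_def_module, hft, smul_zero, sub_zero, smul_comm (s - t)⁻¹]
  rw [hslope]
  exact (hφ.tendsto.mono_left nhdsWithin_le_nhds).smul hf

theorem dslope_add_sub_smul_deriv_dslope {f : 𝕜 → E} {a b : 𝕜} (hf : DifferentiableAt 𝕜 f b)
    (hab : b ≠ a) : dslope f a b + (b - a) • deriv (dslope f a) b = deriv f b := by
  have hprod : HasDerivAt (fun x => (x - a) • dslope f a x)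
      ((b - a) • deriv (dslope f a) b + (1 : 𝕜) • dslope f a b) b :=
    ((hasDerivAt_id b).sub_const a).smul ((differentiableAt_dslope_of_ne hab).2 hf).hasDerivAt
  simp only [sub_smul_dslope, one_smul] at hprod
  rw [add_comm, (hf.hasDerivAt.sub_const (f a)).unique hprod]

end

theorem dslope_zero_eq_ite {𝕜 : Type*} [NontriviallyNormedField 𝕜] [DecidableEq 𝕜] {f : 𝕜 → 𝕜}
    (hf : f 0 = 0) (x : 𝕜) : dslope f 0 x = if x = 0 then deriv f 0 else f x / x := by
  split_ifs with hx
  · rw [hx, dslope_same]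
  · rw [dslope_of_ne f hx, slope_def_field, hf, sub_zero, sub_zero]

section

variable {F : Type*} [NormedAddCommGroup F] [InnerProductSpace ℝ F] {B : ℝ → F} {c t : ℝ}

theorem HasDerivAt.norm_of_eq_smul (hB : HasDerivAt B (c • B t) t) (h0 : B t ≠ 0) :
    HasDerivAt (fun s => ‖B s‖) (c * ‖B t‖) t := by
  have hpos : 0 < ‖B t‖ := norm_pos_iff.2 h0
  have hsq := hB.norm_sq.sqrt (pow_pos hpos 2).ne'
  simp only [Real.sqrt_sq (norm_nonneg _), real_inner_smul_right, real_inner_self_eq_norm_sq]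
    at hsq
  convert hsq using 1
  field_simp

theorem hasDerivAt_comp_norm_smul_of_eq_smul {g : ℝ → ℝ} (hg : DifferentiableAt ℝ g ‖B t‖)
    (hB : HasDerivAt B (c • B t) t) (h0 : B t ≠ 0) :
    HasDerivAt (fun s => g ‖B s‖ • B s) ((c * (g ‖B t‖ + ‖B t‖ * deriv g ‖B t‖)) • B t) t := by
  refine ((hg.hasDerivAt.comp t (hB.norm_of_eq_smul h0)).smul hB).congr_deriv ?_
  rw [Function.comp_apply, smul_smul, ← add_smul]
  congr 1
  ring

end

theorem magnetization_deriv
    (m : ℝ → ℝ) (hodd : ∀ x, m (-x) = - m x) (hm : ContDiff ℝ 2 m)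
    (B : ℝ → EuclideanSpace ℝ (Fin 3)) (hB : Differentiable ℝ B)
    (hpar : ∀ t : ℝ, ∃ c : ℝ, deriv B t = c • B t) :
    ∀ t : ℝ, HasDerivAt
      (fun s => (if ‖B s‖ = 0 then deriv m 0 else m ‖B s‖ / ‖B s‖) • B s)
      (deriv m ‖B t‖ • deriv B t) t := by
  intro t
  have hm0 : m 0 = 0 := by linarith [neg_zero (G := ℝ) ▸ hodd 0]
  have hmd : Differentiable ℝ m := hm.differentiable two_ne_zero
  obtain ⟨c, hc⟩ := hpar t
  have hBt : HasDerivAt B (c • B t) t := hc ▸ (hB t).hasDerivAt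
  simp only [← dslope_zero_eq_ite hm0, hc]
  rcases eq_or_ne (B t) 0 with h0 | h0
  · have hg : ContinuousAt (fun s => dslope m 0 ‖B s‖) t :=
      ContinuousAt.comp_of_eq (continuousAt_dslope_same.2 (hmd 0))
        (hB t).continuousAt.norm (by rw [h0, norm_zero])
    simpa only [h0, smul_zero] using HasDerivAt.smul_of_continuousAt_of_eq_zero hg hBt h0
  · have hr : ‖B t‖ ≠ 0 := norm_ne_zero_iff.2 h0
    have hderiv := dslope_add_sub_smul_deriv_dslope (hmd ‖B t‖) hr
    rw [sub_zero, smul_eq_mul] at hderiv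
    rw [smul_smul, mul_comm, ← hderiv]
    exact hasDerivAt_comp_norm_smul_of_eq_smul
      ((differentiableAt_dslope_of_ne hr).2 (hmd _)) hBt h0
end

section
/- Let m' : [0,b] → ℝ be continuous, positive, and strictly decreasing, with antiderivative m, nodes 0 = x_0 < x_1 < ⋯ < x_{N+1} = b, and tangent-scheme values s_k = m'((x_k + x_{k+1})/2). Then the L¹ error satisfies ∫_0^b |m'(x) − m_N'(x)| dx = Σ_{k=0}^N (2·m((x_k + x_{k+1})/2) − m(x_{k+1}) − m(x_k)), where m_N'(x) = s_k for x ∈ [x_k, x_{k+1}). -/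
/-! Since `m'` is decreasing, on each cell `[x_k, x_{k+1}]` the difference `m' - s_k` is
nonnegative left of the midpoint and nonpositive right of it. Splitting the integral there and
applying the fundamental theorem of calculus on both halves, the constant `s_k` contributes
`-s_k h/2 + s_k h/2 = 0`, leaving `2 m(mid) - m(x_{k+1}) - m(x_k)`. Summing over the cells gives
the theorem, since the step function agrees with `s_k` on the interior of the `k`-th cell. -/

open MeasureTheory Set intervalIntegral

theorem AntitoneOn.integral_abs_sub_apply {g : ℝ → ℝ} {c e d : ℝ} (hce : c ≤ e) (hed : e ≤ d)
    (hg : AntitoneOn g (Icc c d)) :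
    ∫ s in c..d, |g s - g e| =
      (∫ s in c..e, g s) - (∫ s in e..d, g s) + g e * (c + d - 2 * e) := by
  have he : e ∈ Icc c d := ⟨hce, hed⟩
  have hleft : ∫ s in c..e, |g s - g e| = ∫ s in c..e, (g s - g e) := by
    refine integral_congr fun s hs => abs_of_nonneg (sub_nonneg.2 ?_)
    rw [uIcc_of_le hce] at hs
    exact hg ⟨hs.1, hs.2.trans hed⟩ he hs.2
  have hright : ∫ s in e..d, |g s - g e| = ∫ s in e..d, (g e - g s) := by
    refine integral_congr fun s hs => (abs_of_nonpos (sub_nonpos.2 ?_)).trans (neg_sub _ _)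
    rw [uIcc_of_le hed] at hs
    exact hg he ⟨hce.trans hs.1, hs.2⟩ hs.1
  have hi₁ : IntervalIntegrable g volume c e :=
    (hg.mono (uIcc_of_le hce ▸ Icc_subset_Icc_right hed)).intervalIntegrable
  have hi₂ : IntervalIntegrable g volume e d :=
    (hg.mono (uIcc_of_le hed ▸ Icc_subset_Icc_left hce)).intervalIntegrable
  rw [← integral_add_adjacent_intervals ((hi₁.sub intervalIntegrable_const).abs)
      ((hi₂.sub intervalIntegrable_const).abs), hleft, hright,
    integral_sub hi₁ intervalIntegrable_const, integral_sub intervalIntegrable_const hi₂,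
    intervalIntegral.integral_const, intervalIntegral.integral_const, smul_eq_mul, smul_eq_mul]
  ring

theorem integral_abs_sub_deriv_midpoint {f f' : ℝ → ℝ} {c d : ℝ} (hcd : c ≤ d)
    (hf : ∀ s ∈ Icc c d, HasDerivAt f (f' s) s) (hf' : AntitoneOn f' (Icc c d)) :
    ∫ s in c..d, |f' s - f' ((c + d) / 2)| = 2 * f ((c + d) / 2) - f d - f c := by
  have ftc {u v : ℝ} (hcu : c ≤ u) (huv : u ≤ v) (hvd : v ≤ d) :
      ∫ s in u..v, f' s = f v - f u :=
    integral_eq_sub_of_hasDerivAt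
      (fun s hs => hf s (Icc_subset_Icc hcu hvd (uIcc_of_le huv ▸ hs)))
      (hf'.mono (uIcc_of_le huv ▸ Icc_subset_Icc hcu hvd)).intervalIntegrable
  have hce : c ≤ (c + d) / 2 := by linarith
  have hed : (c + d) / 2 ≤ d := by linarith
  rw [hf'.integral_abs_sub_apply hce hed, ftc le_rfl hce hed, ftc hce hed le_rfl]
  ring

theorem IntervalIntegrable.trans_fin {f : ℝ → ℝ} {μ : Measure ℝ} :
    ∀ {n : ℕ} (x : Fin (n + 1) → ℝ),
      (∀ k : Fin n, IntervalIntegrable f μ (x k.castSucc) (x k.succ)) →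
      IntervalIntegrable f μ (x 0) (x (Fin.last n))
  | 0, _, _ => .refl
  | n + 1, x, hint => by
    have h := trans_fin (fun i => x i.castSucc) fun k => by
      simpa only [Fin.succ_castSucc] using hint k.castSucc
    simpa using h.trans (hint (Fin.last n))

theorem sum_integral_adjacent_intervals_fin {f : ℝ → ℝ} {μ : Measure ℝ} :
    ∀ {n : ℕ} (x : Fin (n + 1) → ℝ),
      (∀ k : Fin n, IntervalIntegrable f μ (x k.castSucc) (x k.succ)) →
      ∑ k : Fin n, ∫ s in x k.castSucc..x k.succ, f s ∂μ = ∫ s in x 0..x (Fin.last n), f s ∂μ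
  | 0, _, _ => by simp
  | n + 1, x, hint => by
    have hint' (k : Fin n) :
        IntervalIntegrable f μ (x k.castSucc.castSucc) (x k.succ.castSucc) := by
      simpa only [Fin.succ_castSucc] using hint k.castSucc
    have ih := sum_integral_adjacent_intervals_fin (fun i => x i.castSucc) hint'
    have hlast := IntervalIntegrable.trans_fin (fun i => x i.castSucc) hint'
    rw [Fin.sum_univ_castSucc]
    simp only [Fin.succ_castSucc, Fin.castSucc_zero] at ih hlast ⊢
    rw [ih, integral_add_adjacent_intervals hlast (hint _), Fin.succ_last]

theorem tangent_L1_error_general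
    (b : ℝ) (m m' : ℝ → ℝ)
    (hderiv : ∀ s ∈ Set.Icc (0 : ℝ) b, HasDerivAt m (m' s) s)
    (hanti : StrictAntiOn m' (Set.Icc 0 b))
    (N : ℕ) (x : Fin (N + 2) → ℝ) (hmono : StrictMono x)
    (hx0 : x 0 = 0) (hxlast : x (Fin.last (N + 1)) = b)
    (mN' : ℝ → ℝ)
    (hstep : ∀ k : Fin (N + 1), ∀ y ∈ Set.Ico (x k.castSucc) (x k.succ),
      mN' y = m' ((x k.castSucc + x k.succ) / 2)) :
    ∫ s in (0 : ℝ)..b, |m' s - mN' s| =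
      ∑ k : Fin (N + 1),
        (2 * m ((x k.castSucc + x k.succ) / 2) - m (x k.succ) - m (x k.castSucc)) := by
  have hle (k : Fin (N + 1)) : x k.castSucc ≤ x k.succ := hmono.monotone (Fin.castSucc_le_succ k)
  have hcell (k : Fin (N + 1)) : Icc (x k.castSucc) (x k.succ) ⊆ Icc 0 b :=
    hx0 ▸ hxlast ▸ Icc_subset_Icc (hmono.monotone (Fin.zero_le _)) (hmono.monotone (Fin.le_last _))
  have hanti_cell (k : Fin (N + 1)) : AntitoneOn m' (Icc (x k.castSucc) (x k.succ)) :=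
    hanti.antitoneOn.mono (hcell k)
  have hcongr (k : Fin (N + 1)) : EqOn (fun s => |m' s - mN' s|)
      (fun s => |m' s - m' ((x k.castSucc + x k.succ) / 2)|) (Ioo (x k.castSucc) (x k.succ)) :=
    fun s hs => by simp only [hstep k s (Ioo_subset_Ico_self hs)]
  have hint (k : Fin (N + 1)) :
      IntervalIntegrable (fun s => |m' s - mN' s|) volume (x k.castSucc) (x k.succ) := by
    refine IntervalIntegrable.congr_uIoo ?_ (uIoo_of_le (hle k) ▸ hcongr k).symm
    exact (((uIcc_of_le (hle k)).symm ▸ hanti_cell k).intervalIntegrable.sub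
      intervalIntegrable_const).abs
  rw [← hx0, ← hxlast, ← sum_integral_adjacent_intervals_fin x hint]
  refine Finset.sum_congr rfl fun k _ => ?_
  rw [integral_congr_Ioo_of_le (hle k) (hcongr k)]
  exact integral_abs_sub_deriv_midpoint (hle k) (fun s hs => hderiv s (hcell k hs)) (hanti_cell k)

theorem tangent_L1_error
    (b : ℝ) (hb : 0 < b) (m m' : ℝ → ℝ)
    (hderiv : ∀ s ∈ Set.Icc (0 : ℝ) b, HasDerivAt m (m' s) s)
    (hcont : ContinuousOn m' (Set.Icc 0 b))
    (hpos : ∀ s ∈ Set.Icc (0 : ℝ) b, 0 < m' s)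
    (hanti : StrictAntiOn m' (Set.Icc 0 b))
    (N : ℕ) (x : Fin (N + 2) → ℝ) (hmono : StrictMono x)
    (hx0 : x 0 = 0) (hxlast : x (Fin.last (N + 1)) = b)
    (mN' : ℝ → ℝ)
    (hstep : ∀ k : Fin (N + 1), ∀ y ∈ Set.Ico (x k.castSucc) (x k.succ),
      mN' y = m' ((x k.castSucc + x k.succ) / 2)) :
    ∫ s in (0 : ℝ)..b, |m' s - mN' s| =
      ∑ k : Fin (N + 1),
        (2 * m ((x k.castSucc + x k.succ) / 2) - m (x k.succ) - m (x k.castSucc)) :=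
  tangent_L1_error_general b m m' hderiv hanti N x hmono hx0 hxlast mN' hstep
end

section
/- Let B : ℝ → ℝ³ be twice differentiable with B(t) ≠ 0, and suppose B'(s) is parallel to B(s) for all s in a neighborhood of t. Then the acceleration satisfies B''(t) = (B(t)/|B(t)|) · (d²/dt²)|B(t)|, i.e., the second derivative of B is also directed along B. -/
/-!
If `B' = c • B` then the direction `‖B‖⁻¹ • B` has zero derivative, so it is constant near `t`.
Hence `B = ‖B‖ • u₀` near `t` for the fixed unit vector `u₀`, and the second derivative of `B`
is that of `‖B‖` times `u₀`.
-/

open Filter Topology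

theorem deriv_fun_smul_const_of_ne_zero {𝕜 F : Type*} [NontriviallyNormedField 𝕜]
    [NormedAddCommGroup F] [NormedSpace 𝕜 F] [SeparatingDual 𝕜 F]
    {f : 𝕜 → 𝕜} {v : F} (hv : v ≠ 0) :
    deriv (fun y => f y • v) = fun x => deriv f x • v := by
  funext x
  by_cases hf : DifferentiableAt 𝕜 f x
  · exact deriv_smul_const hf v
  · obtain ⟨φ, hφ⟩ := SeparatingDual.exists_eq_one (R := 𝕜) hv
    have hfv : ¬DifferentiableAt 𝕜 (fun y => f y • v) x := fun h =>
      hf (by simpa [Function.comp_def, hφ] using φ.differentiableAt.comp x h)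
    rw [deriv_zero_of_not_differentiableAt hf, deriv_zero_of_not_differentiableAt hfv, zero_smul]

theorem eventuallyEq_const_of_eventually_hasDerivAt_zero {F : Type*} [NormedAddCommGroup F]
    [NormedSpace ℝ F] {f : ℝ → F} {t : ℝ} (hf : ∀ᶠ s in 𝓝 t, HasDerivAt f 0 s) :
    f =ᶠ[𝓝 t] fun _ => f t := by
  obtain ⟨ε, hε, hball⟩ := Metric.eventually_nhds_iff_ball.mp hf
  refine Metric.eventually_nhds_iff_ball.mpr ⟨ε, hε, fun s hs => ?_⟩
  exact Metric.isOpen_ball.is_const_of_deriv_eq_zero (convex_ball t ε).isPreconnected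
    (fun u hu => (hball u hu).differentiableAt.differentiableWithinAt)
    (fun u hu => (hball u hu).deriv) hs (Metric.mem_ball_self hε)

section InnerProductSpace

variable {F : Type*} [NormedAddCommGroup F] [InnerProductSpace ℝ F] {B : ℝ → F}

theorem HasDerivAt.norm_of_smul_self {c s : ℝ} (hB : HasDerivAt B (c • B s) s)
    (h0 : B s ≠ 0) : HasDerivAt (fun u => ‖B u‖) (c * ‖B s‖) s := by
  have hN : HasDerivAt (fun u => ‖B u‖) (_root_.deriv (fun u => ‖B u‖) s) s :=
    (hB.differentiableAt.norm ℝ h0).hasDerivAt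
  -- two expressions for the derivative of `‖B‖ ^ 2`
  have hsq := (hN.pow 2).unique hB.norm_sq
  rw [real_inner_smul_right, real_inner_self_eq_norm_sq] at hsq
  push_cast at hsq
  convert hN using 1
  apply mul_left_cancel₀ (norm_ne_zero_iff.mpr h0)
  linear_combination -hsq / 2

theorem HasDerivAt.inv_norm_smul_self_of_smul_self {c s : ℝ} (hB : HasDerivAt B (c • B s) s)
    (h0 : B s ≠ 0) : HasDerivAt (fun u => ‖B u‖⁻¹ • B u) 0 s := by
  have hN := (hB.norm_of_smul_self h0).inv (norm_ne_zero_iff.mpr h0)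
  refine (hN.smul hB).congr_deriv ?_
  rw [smul_smul, ← add_smul, ← zero_smul ℝ (B s)]
  congr 1
  simp only [Pi.inv_apply]
  field_simp
  ring

theorem eventuallyEq_norm_smul_of_deriv_parallel {t : ℝ}
    (hB : ∀ᶠ s in 𝓝 t, DifferentiableAt ℝ B s) (ht : B t ≠ 0)
    (hpar : ∀ᶠ s in 𝓝 t, ∃ c : ℝ, deriv B s = c • B s) :
    B =ᶠ[𝓝 t] fun s => ‖B s‖ • (‖B t‖⁻¹ • B t) := by
  have hne : ∀ᶠ s in 𝓝 t, B s ≠ 0 := hB.self_of_nhds.continuousAt.eventually_ne ht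
  have hdir : (fun s => ‖B s‖⁻¹ • B s) =ᶠ[𝓝 t] fun _ => ‖B t‖⁻¹ • B t := by
    refine eventuallyEq_const_of_eventually_hasDerivAt_zero ?_
    filter_upwards [hB, hpar, hne] with s hd ⟨c, hc⟩ h0
    exact (hc ▸ hd.hasDerivAt).inv_norm_smul_self_of_smul_self h0
  filter_upwards [hdir, hne] with s hs h0
  rw [← hs, smul_smul, mul_inv_cancel₀ (norm_ne_zero_iff.mpr h0), one_smul]

end InnerProductSpace

theorem acceleration_along_field
    (B : ℝ → EuclideanSpace ℝ (Fin 3)) (hB : ContDiff ℝ 2 B)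
    (t : ℝ) (ht : B t ≠ 0)
    (hpar : ∀ᶠ s in nhds t, ∃ c : ℝ, deriv B s = c • B s) :
    deriv (deriv B) t =
      (deriv (deriv (fun s => ‖B s‖)) t) • (‖B t‖⁻¹ • B t) := by
  have hu : ‖B t‖⁻¹ • B t ≠ 0 := smul_ne_zero (inv_ne_zero (norm_ne_zero_iff.mpr ht)) ht
  have hray := eventuallyEq_norm_smul_of_deriv_parallel
    (Eventually.of_forall (hB.differentiable (by norm_num))) ht hpar
  rw [hray.deriv.deriv_eq, deriv_fun_smul_const_of_ne_zero hu,
    deriv_fun_smul_const_of_ne_zero hu]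
end
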